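/- Let x₁, x₂ ∈ ℍ be quaternions such that x̄₁x₂ = s − t·i for some real numbers s and t with t ≥ 0. Then the complex 2×2 matrix A(x₁) + √−1·A(x₂) is invertible if and only if x₂ ≠ −x₁·i. Moreover one always has (A(x̄₁) − √−1·A(x̄₂))·(A(x₁) + √−1·A(x₂)) = diag(N(x₁)+N(x₂)+2t, N(x₁)+N(x₂)−2t), and when x₂ ≠ −x₁·i the inverse is given by (A(x₁)+√−1·A(x₂))^{−1} = diag((N(x₁)+N(x₂)+2t)^{−1}, (N(x₁)+N(x₂)−2t)^{−1})·(A(x̄₁) − √−1·A(x̄₂)). -/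

import Mathlib

/-!
`A` is a `*`-homomorphism, `A(x̄) = A(x)ᴴ`, so `M = A(x₁) + √−1·A(x₂)` satisfies
`Mᴴ M = A(x̄₁x₁ + x̄₂x₂) + √−1·A(q − q̄)` with `q = x̄₁x₂ = s − t·i`, which is the diagonal
matrix `diag(N₁ + N₂ + 2t, N₁ + N₂ − 2t)`. Hence `M` is invertible iff both entries are nonzero,
and then `M⁻¹ = (Mᴴ M)⁻¹ Mᴴ`. Since `N₁ N₂ = N(q) = s² + t²`, AM–GM gives `N₁ + N₂ ≥ 2t`, with
equality iff `s = 0` and `N₁ = N₂ = t`; then `N₁ x₂ = x₁ x̄₁ x₂ = −N₁ x₁ i`, i.e. `x₂ = −x₁ i`.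
-/

noncomputable section

/-- The ℝ-algebra embedding `A : ℍ → M₂(ℂ)`. -/
def Amap (q : Quaternion ℝ) : Matrix (Fin 2) (Fin 2) ℂ :=
  !![(q.re : ℂ) + (q.imI : ℂ) * Complex.I, (q.imJ : ℂ) + (q.imK : ℂ) * Complex.I;
     -(q.imJ : ℂ) + (q.imK : ℂ) * Complex.I, (q.re : ℂ) - (q.imI : ℂ) * Complex.I]

/-- Reduced norm `N(x) = x·x̄`. -/
def qN (x : Quaternion ℝ) : ℝ := x.re ^ 2 + x.imI ^ 2 + x.imJ ^ 2 + x.imK ^ 2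

/-- The quaternion unit `i`. -/
def qi : Quaternion ℝ := ⟨0, 1, 0, 0⟩

open Matrix Quaternion
open Complex (I I_mul_I)

@[simp] theorem qi_re : qi.re = 0 := rfl
@[simp] theorem qi_imI : qi.imI = 1 := rfl
@[simp] theorem qi_imJ : qi.imJ = 0 := rfl
@[simp] theorem qi_imK : qi.imK = 0 := rfl

theorem normSq_qi : normSq qi = 1 := by
  simp [normSq_def']

theorem qN_eq_normSq (x : Quaternion ℝ) : qN x = normSq x := by
  rw [normSq_def', qN]

theorem Amap_add (p q : Quaternion ℝ) : Amap (p + q) = Amap p + Amap q := by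
  ext i j
  fin_cases i <;> fin_cases j <;> simp [Amap] <;> ring

theorem Amap_sub (p q : Quaternion ℝ) : Amap (p - q) = Amap p - Amap q := by
  ext i j
  fin_cases i <;> fin_cases j <;> simp [Amap] <;> ring

theorem Amap_mul (p q : Quaternion ℝ) : Amap (p * q) = Amap p * Amap q := by
  ext i j
  fin_cases i <;> fin_cases j <;>
    simp [Amap, mul_apply, Fin.sum_univ_two, Complex.ext_iff] <;> constructor <;> ring

theorem Amap_star (q : Quaternion ℝ) : Amap (star q) = (Amap q)ᴴ := by
  ext i j
  fin_cases i <;> fin_cases j <;> simp [Amap]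

theorem conjTranspose_Amap_add_I_smul (x₁ x₂ : Quaternion ℝ) :
    (Amap x₁ + I • Amap x₂)ᴴ = Amap (star x₁) - I • Amap (star x₂) := by
  simp [conjTranspose_add, conjTranspose_smul, Amap_star, sub_eq_add_neg]

theorem conjTranspose_mul_self_Amap_add_I_smul (x₁ x₂ : Quaternion ℝ) :
    (Amap x₁ + I • Amap x₂)ᴴ * (Amap x₁ + I • Amap x₂)
      = Amap (star x₁ * x₁ + star x₂ * x₂) + I • Amap (star x₁ * x₂ - star (star x₁ * x₂)) := by
  rw [conjTranspose_Amap_add_I_smul]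
  simp only [star_mul, star_star, Amap_add, Amap_sub, Amap_mul, sub_mul, mul_add, smul_mul_assoc,
    mul_smul_comm, smul_smul, I_mul_I, smul_sub]
  rw [neg_one_smul]
  abel

theorem conjTranspose_mul_self_Amap_add_I_smul_eq_diagonal {x₁ x₂ : Quaternion ℝ} {s t : ℝ}
    (h : star x₁ * x₂ = (s : Quaternion ℝ) - t • qi) :
    (Amap x₁ + I • Amap x₂)ᴴ * (Amap x₁ + I • Amap x₂)
      = diagonal ![((normSq x₁ + normSq x₂ + 2 * t : ℝ) : ℂ),
          ((normSq x₁ + normSq x₂ - 2 * t : ℝ) : ℂ)] := by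
  rw [conjTranspose_mul_self_Amap_add_I_smul, h, star_mul_self, star_mul_self]
  ext i j
  fin_cases i <;> fin_cases j <;> simp [Amap, Complex.ext_iff] <;> ring

theorem normSq_add_normSq_sub_two_mul_eq_zero_iff {x₁ x₂ : Quaternion ℝ} {s t : ℝ}
    (h : star x₁ * x₂ = (s : Quaternion ℝ) - t • qi) :
    normSq x₁ + normSq x₂ - 2 * t = 0 ↔ x₂ = -(x₁ * qi) := by
  constructor
  · intro hd
    have hnorm : normSq x₁ * normSq x₂ = s ^ 2 + t ^ 2 := by
      rw [← normSq_star x₁, ← map_mul, h, normSq_def']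
      simp
    have h₁ := normSq_nonneg (a := x₁)
    have h₂ := normSq_nonneg (a := x₂)
    have hs : s = 0 := by nlinarith [sq_nonneg s, sq_nonneg (normSq x₁ - normSq x₂)]
    have ht : t = normSq x₁ := by nlinarith [sq_nonneg (normSq x₁ - normSq x₂)]
    have hsmul : normSq x₁ • x₂ = normSq x₁ • -(x₁ * qi) := by
      have := congrArg (x₁ * ·) h
      simp only [← mul_assoc, self_mul_star, coe_mul_eq_smul] at this
      rw [this, hs, ht]
      simp
    rcases eq_or_ne (normSq x₁) 0 with h0 | h0
    · have hx₂ : normSq x₂ = 0 := by linarith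
      simp [normSq_eq_zero.mp h0, normSq_eq_zero.mp hx₂]
    · exact smul_right_injective _ h0 hsmul
  · rintro rfl
    have ht : normSq x₁ = t := by
      rw [mul_neg, ← mul_assoc, star_mul_self, coe_mul_eq_smul] at h
      simpa using congrArg QuaternionAlgebra.imI h
    rw [normSq_neg, map_mul, normSq_qi, ← ht]
    ring

theorem Matrix.isUnit_conjTranspose_mul_self_iff {n K : Type*} [Fintype n] [DecidableEq n]
    [Field K] [StarRing K] (M : Matrix n n K) : IsUnit (Mᴴ * M) ↔ IsUnit M := by
  simp only [isUnit_iff_isUnit_det M, isUnit_iff_isUnit_det (Mᴴ * M), det_mul, det_conjTranspose,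
    isUnit_iff_ne_zero, mul_ne_zero_iff, star_ne_zero, and_self]

theorem Matrix.inv_eq_diagonal_mul_of_mul_eq_diagonal {n K : Type*} [Fintype n] [DecidableEq n]
    [Field K] {B M : Matrix n n K} {d e : n → K} (h : B * M = diagonal d)
    (he : ∀ i, e i * d i = 1) : M⁻¹ = diagonal e * B :=
  inv_eq_left_inv (by rw [mul_assoc, h, diagonal_mul_diagonal]; simp only [he, diagonal_one])

/-- if `x̄₁x₂ = s − t·i` with s, t real and t ≥ 0, then
`A(x₁) + √−1·A(x₂)` is invertible iff `x₂ ≠ −x₁·i`; one always has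
`(A(x̄₁) − √−1·A(x̄₂))·(A(x₁) + √−1·A(x₂)) = diag(N(x₁)+N(x₂)+2t, N(x₁)+N(x₂)−2t)`;
and when `x₂ ≠ −x₁·i`,
`(A(x₁)+√−1·A(x₂))⁻¹ = diag((N(x₁)+N(x₂)+2t)⁻¹, (N(x₁)+N(x₂)−2t)⁻¹)·(A(x̄₁) − √−1·A(x̄₂))`. -/
theorem stmt5 (x₁ x₂ : Quaternion ℝ) (s t : ℝ) (ht : 0 ≤ t)
    (h : star x₁ * x₂ = (⟨s, -t, 0, 0⟩ : Quaternion ℝ)) :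
    (IsUnit (Amap x₁ + Complex.I • Amap x₂) ↔ x₂ ≠ -(x₁ * qi)) ∧
    (Amap (star x₁) - Complex.I • Amap (star x₂)) * (Amap x₁ + Complex.I • Amap x₂)
      = Matrix.diagonal ![((qN x₁ + qN x₂ + 2 * t : ℝ) : ℂ), ((qN x₁ + qN x₂ - 2 * t : ℝ) : ℂ)] ∧
    (x₂ ≠ -(x₁ * qi) →
      (Amap x₁ + Complex.I • Amap x₂)⁻¹
        = Matrix.diagonal ![(((qN x₁ + qN x₂ + 2 * t : ℝ) : ℂ))⁻¹,
            (((qN x₁ + qN x₂ - 2 * t : ℝ) : ℂ))⁻¹]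
          * (Amap (star x₁) - Complex.I • Amap (star x₂))) := by
  replace h : star x₁ * x₂ = (s : Quaternion ℝ) - t • qi := h.trans (by ext <;> simp)
  have hprod := conjTranspose_mul_self_Amap_add_I_smul_eq_diagonal h
  have hdiag : (normSq x₁ + normSq x₂ + 2 * t ≠ 0 ∧ normSq x₁ + normSq x₂ - 2 * t ≠ 0) ↔
      x₂ ≠ -(x₁ * qi) := by
    simp only [ne_eq, ← normSq_add_normSq_sub_two_mul_eq_zero_iff h]
    have h₁ := normSq_nonneg (a := x₁)
    have h₂ := normSq_nonneg (a := x₂)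
    exact ⟨And.right, fun hne => ⟨fun h₀ => hne (by linarith), hne⟩⟩
  simp only [qN_eq_normSq, ← conjTranspose_Amap_add_I_smul]
  refine ⟨?_, hprod, fun hne => ?_⟩
  · rw [← isUnit_conjTranspose_mul_self_iff, hprod, isUnit_diagonal, Pi.isUnit_iff,
      Fin.forall_fin_two, ← hdiag]
    simp only [cons_val_zero, cons_val_one, isUnit_iff_ne_zero, ne_eq, Complex.ofReal_eq_zero]
  · obtain ⟨hp, hm⟩ := hdiag.mpr hne
    exact inv_eq_diagonal_mul_of_mul_eq_diagonal hprod <| Fin.forall_fin_two.mpr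
      ⟨inv_mul_cancel₀ (Complex.ofReal_ne_zero.mpr hp),
        inv_mul_cancel₀ (Complex.ofReal_ne_zero.mpr hm)⟩
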